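/- arXiv:1901.04919 — 2 statements merged into one kernel-verified Lean document; each statement's English description precedes it below -/
import Mathlib

section
/- Let (G_i, p_i) be a tower of groups indexed by ℕ with all transition homomorphisms p_i : G_{i+1} → G_i surjective. Let (P_i, q_i) be a tower of nonempty sets, where each P_i carries a free and transitive G_i-action and each map q_i : P_{i+1} → P_i is equivariant, i.e. q_i(g • p) = p_i(g) • q_i(p). Then the inverse limit lim P_i (the set of compatible sequences) is nonempty, and the induced action of the group lim G_i on lim P_i is free and transitive. -/
/-- **Inverse limits of torsors over a tower of groups with surjective transition maps.**
Let `(G i, p i)` be a tower of groups with surjective transition homomorphisms, and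
`(P i, q i)` a tower of nonempty sets where each `P i` is a free and transitive `G i`-set and
each `q i` is equivariant.  Then the inverse limit of the `P i` is nonempty, and the inverse
limit group `lim G i` acts freely and transitively on it. -/
theorem stmt_1 (G : ℕ → Type*) [∀ i, Group (G i)]
    (p : ∀ i, G (i + 1) →* G i) (hp : ∀ i, Function.Surjective (p i))
    (P : ℕ → Type*) [∀ i, Nonempty (P i)] [∀ i, MulAction (G i) (P i)]
    (hfree : ∀ i, ∀ x y : P i, ∃! g : G i, g • x = y)
    (q : ∀ i, P (i + 1) → P i)
    (hq : ∀ i (g : G (i + 1)) (x : P (i + 1)), q i (g • x) = p i g • q i x) :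
    (∃ x : ∀ i, P i, ∀ i, q i (x (i + 1)) = x i) ∧
      (∀ x y : ∀ i, P i, (∀ i, q i (x (i + 1)) = x i) → (∀ i, q i (y (i + 1)) = y i) →
        ∃! g : {g : ∀ i, G i // ∀ i, p i (g (i + 1)) = g i},
          ∀ i, (g : ∀ i, G i) i • x i = y i) := by
  have hqsurj : ∀ i, Function.Surjective (q i) := by
    intro i y
    obtain ⟨z⟩ := ‹∀ i, Nonempty (P i)› (i + 1)
    obtain ⟨g, hg, -⟩ := hfree i (q i z) y
    obtain ⟨g', hg'⟩ := hp i g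
    exact ⟨g' • z, by rw [hq, hg', hg]⟩
  constructor
  · choose f hf using hqsurj
    obtain ⟨x0⟩ := ‹∀ i, Nonempty (P i)› 0
    exact ⟨fun i => Nat.rec x0 (fun n xn => f n xn) i, fun i => hf i _⟩
  · intro x y hx hy
    choose g hg hgu using fun i => hfree i (x i) (y i)
    have hcomp : ∀ i, p i (g (i + 1)) = g i := by
      intro i
      apply hgu
      rw [← hx i, ← hq, hg, hy]
    refine ⟨⟨g, hcomp⟩, fun i => hg i, ?_⟩
    rintro ⟨g', hg'⟩ h
    ext i
    exact hgu i _ (h i)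
end

section
/- Let M be an additive commutative group (or a module), σ : M → M an injective additive endomorphism, and I any index set. Let lim(M, σ) = {(m_k)_{k∈ℕ} : σ(m_{k+1}) = m_k} denote the inverse limit of the constant tower with transition map σ, and similarly for the direct sum ⊕_{i∈I} M with the componentwise endomorphism. Then the canonical map ⊕_{i∈I} lim(M, σ) → lim(⊕_{i∈I} M, ⊕σ) is an isomorphism of additive groups. -/
/-- The inverse limit of the constant tower on `M` with transition map `σ`, as an additive
subgroup of `ℕ → M`: sequences `(m k)` with `σ (m (k+1)) = m k`. -/
def limTower {M : Type*} [AddCommGroup M] (σ : M →+ M) : AddSubgroup (ℕ → M) where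
  carrier := {x | ∀ k, σ (x (k + 1)) = x k}
  add_mem' := by
    intro a b ha hb k
    simp only [Pi.add_apply, map_add, ha k, hb k]
  zero_mem' := by
    intro k
    simp
  neg_mem' := by
    intro a ha k
    simp only [Pi.neg_apply, map_neg, ha k]

/-!
A compatible sequence along an injective `σ` that vanishes at level `0` vanishes everywhere, since
`σ (x (k+1)) = x k = 0` forces `x (k+1) = 0`. Applied coordinatewise to a compatible sequence
`y` of finitely supported families, this shows that every `y k` is supported in the finite set
`(y 0).support`, so `y` is the image of the finitely supported family of its coordinate sequences.
-/

namespace limTower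

variable {M : Type*} [AddCommGroup M] {σ : M →+ M}

theorem eq_zero_of_apply_zero (hσ : Function.Injective σ) {x : ℕ → M} (hx : x ∈ limTower σ)
    (h₀ : x 0 = 0) : x = 0 := by
  funext k
  induction k with
  | zero => exact h₀
  | succ k ih => exact hσ (by rw [hx k, ih, Pi.zero_apply, Pi.zero_apply, map_zero])

theorem coord_mem {I : Type*} {y : ℕ → I →₀ M}
    (hy : y ∈ limTower (Finsupp.mapRange.addMonoidHom (ι := I) σ)) (i : I) :
    (fun k => y k i) ∈ limTower σ :=
  fun k => by simpa using DFunLike.congr_fun (hy k) i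

variable (σ) (I : Type*)

noncomputable def finsuppEquiv (hσ : Function.Injective σ) :
    (I →₀ limTower σ) ≃+ limTower (Finsupp.mapRange.addMonoidHom (ι := I) σ) where
  toFun x := ⟨fun k => x.mapRange (fun s : limTower σ => (s : ℕ → M) k) rfl,
    fun k => by ext i; simpa using (x i).2 k⟩
  invFun y := Finsupp.onFinset ((y : ℕ → I →₀ M) 0).support
    (fun i => ⟨fun k => (y : ℕ → I →₀ M) k i, coord_mem y.2 i⟩)
    (fun i hi => Finsupp.mem_support_iff.2 fun h₀ =>
      hi (Subtype.ext (eq_zero_of_apply_zero hσ (coord_mem y.2 i) h₀)))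
  left_inv x := by ext; rfl
  right_inv y := by ext; rfl
  map_add' x y := by ext; simp

end limTower

/-- **Direct sums commute with inverse limits along an injective endomorphism.**
Let `M` be an additive commutative group, `σ : M →+ M` an injective additive endomorphism and
`I` any index set.  Then the canonical map
`⊕_{i ∈ I} lim(M, σ) → lim(⊕_{i ∈ I} M, ⊕σ)` is an isomorphism of additive groups. -/
theorem stmt_10 {M : Type*} [AddCommGroup M] (σ : M →+ M)
    (hσ : Function.Injective σ) (I : Type*) :
    ∃ e : (I →₀ limTower σ) ≃+ limTower (Finsupp.mapRange.addMonoidHom (ι := I) σ),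
      ∀ (x : I →₀ limTower σ) (k : ℕ) (i : I),
        ((e x : ℕ → (I →₀ M)) k) i = ((x i : ℕ → M)) k :=
  ⟨limTower.finsuppEquiv σ I hσ, fun _ _ _ => rfl⟩
end
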